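/- Let n ≥ 1 be an integer and M, C > 0 real constants. Let V, e, W : (0,1] → ℝ be functions with V(δ) ≥ 0, 0 ≤ e(δ) ≤ M and W(δ) ≥ 0 for all δ ∈ (0,1], and suppose that for every δ ∈ (0,1] and every t ∈ [0, 1/(10n)] with V(δ) + n·t·e(δ) − 5·n²·t²·M ≥ 0 one has C^{n−1}·W(δ) ≥ (V(δ) + n·t·e(δ) − 5·n²·t²·M)ⁿ. If W(δ) → 0 as δ → 0⁺, then e(δ) → 0 and V(δ) → 0 as δ → 0⁺. -/

import Mathlib

open Filter Set Topology

/-!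
Evaluating the quadratic `t ↦ V + n t e − 5 n² t² M` at its vertex `t = e / (10 n M)`, which is
admissible because `e ≤ M`, turns the hypothesis into `(V + e² / (20 M))ⁿ ≤ Cⁿ⁻¹ W`. Hence
`V + e² / (20 M) → 0`, and both summands are nonnegative.
-/

theorem tendsto_nhds_zero_of_pow_le {α : Type*} {l : Filter α} {f g : α → ℝ} {n : ℕ}
    (hn : n ≠ 0) (hf : ∀ᶠ x in l, 0 ≤ f x) (hfg : ∀ᶠ x in l, f x ^ n ≤ g x)
    (hg : Tendsto g l (𝓝 0)) : Tendsto f l (𝓝 0) := by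
  have hn' : (0 : ℝ) < (n : ℝ)⁻¹ := by positivity
  have hroot : Tendsto (fun x => g x ^ (n : ℝ)⁻¹) l (𝓝 0) := by
    simpa [Real.zero_rpow hn'.ne'] using hg.rpow_const (Or.inr hn'.le)
  refine tendsto_of_tendsto_of_tendsto_of_le_of_le' tendsto_const_nhds hroot hf ?_
  filter_upwards [hf, hfg] with x hfx hfgx
  calc f x = (f x ^ n) ^ (n : ℝ)⁻¹ := (Real.pow_rpow_inv_natCast hfx hn).symm
    _ ≤ g x ^ (n : ℝ)⁻¹ := Real.rpow_le_rpow (pow_nonneg hfx n) hfgx hn'.le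

section Vertex

variable {n M e : ℝ}

theorem quadratic_eval_vertex (hn : n ≠ 0) (hM : M ≠ 0) (V : ℝ) :
    V + n * (e / (10 * n * M)) * e - 5 * n ^ 2 * (e / (10 * n * M)) ^ 2 * M
      = V + e ^ 2 / (20 * M) := by
  field_simp
  ring

theorem vertex_mem_Icc (hn : 0 < n) (hM : 0 < M) (he0 : 0 ≤ e) (heM : e ≤ M) :
    e / (10 * n * M) ∈ Icc 0 (1 / (10 * n)) := by
  refine ⟨by positivity, ?_⟩
  rw [div_le_div_iff₀ (by positivity) (by positivity)]
  nlinarith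

end Vertex

theorem stmt_2_general (n : ℕ) (hn : 1 ≤ n) (M C : ℝ) (hM : 0 < M)
    (V e W : ℝ → ℝ)
    (hV : ∀ δ ∈ Ioc (0 : ℝ) 1, 0 ≤ V δ)
    (he0 : ∀ δ ∈ Ioc (0 : ℝ) 1, 0 ≤ e δ)
    (heM : ∀ δ ∈ Ioc (0 : ℝ) 1, e δ ≤ M)
    (hkey : ∀ δ ∈ Ioc (0 : ℝ) 1, ∀ t ∈ Icc (0 : ℝ) (1 / (10 * n)),
      0 ≤ V δ + n * t * e δ - 5 * n ^ 2 * t ^ 2 * M →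
      C ^ (n - 1) * W δ ≥ (V δ + n * t * e δ - 5 * n ^ 2 * t ^ 2 * M) ^ n)
    (hWlim : Tendsto W (nhdsWithin 0 (Ioi 0)) (nhds 0)) :
    Tendsto e (nhdsWithin 0 (Ioi 0)) (nhds 0) ∧
      Tendsto V (nhdsWithin 0 (Ioi 0)) (nhds 0) := by
  have hn0 : (0 : ℝ) < n := by exact_mod_cast hn
  have hδ : ∀ᶠ δ in 𝓝[>] 0, δ ∈ Ioc (0 : ℝ) 1 := Ioc_mem_nhdsGT_of_mem ⟨le_rfl, one_pos⟩
  set g : ℝ → ℝ := fun δ => V δ + e δ ^ 2 / (20 * M) with hg_def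
  have hg_nonneg : ∀ᶠ δ in 𝓝[>] 0, 0 ≤ g δ := by
    filter_upwards [hδ] with δ hδ using add_nonneg (hV δ hδ) (by positivity)
  have hg : Tendsto g (𝓝[>] 0) (𝓝 0) := by
    refine tendsto_nhds_zero_of_pow_le (n := n) (by omega) hg_nonneg ?_
      (by simpa using hWlim.const_mul (C ^ (n - 1)))
    filter_upwards [hδ, hg_nonneg] with δ hδ hgδ
    have hvertex := quadratic_eval_vertex (e := e δ) hn0.ne' hM.ne' (V δ)
    have := hkey δ hδ _ (vertex_mem_Icc hn0 hM (he0 δ hδ) (heM δ hδ)) (hvertex ▸ hgδ)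
    rwa [hvertex] at this
  constructor
  · refine tendsto_nhds_zero_of_pow_le two_ne_zero (eventually_of_mem hδ he0) ?_
      (by simpa using hg.const_mul (20 * M))
    filter_upwards [hδ] with δ hδ
    have : 20 * M * g δ = 20 * M * V δ + e δ ^ 2 := by
      simp only [hg_def]; field_simp
    nlinarith [hV δ hδ]
  · refine tendsto_of_tendsto_of_tendsto_of_le_of_le' tendsto_const_nhds hg
      (eventually_of_mem hδ hV) ?_
    filter_upwards [hδ] with δ hδ
    exact le_add_of_nonneg_right (by positivity)

/-- Analytic skeleton of the proof of the main theorem (orthogonality of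
divisorial Zariski decompositions for classes of volume zero): if
`W(δ) → 0` as `δ → 0⁺` and for every admissible `t` the Morse-type inequality
`C^{n-1}·W(δ) ≥ (V(δ) + n·t·e(δ) − 5·n²·t²·M)ⁿ` holds, then
`e(δ) → 0` and `V(δ) → 0` as `δ → 0⁺`. -/
theorem stmt_2 (n : ℕ) (hn : 1 ≤ n) (M C : ℝ) (hM : 0 < M) (hC : 0 < C)
    (V e W : ℝ → ℝ)
    (hV : ∀ δ ∈ Ioc (0 : ℝ) 1, 0 ≤ V δ)
    (he0 : ∀ δ ∈ Ioc (0 : ℝ) 1, 0 ≤ e δ)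
    (heM : ∀ δ ∈ Ioc (0 : ℝ) 1, e δ ≤ M)
    (hW : ∀ δ ∈ Ioc (0 : ℝ) 1, 0 ≤ W δ)
    (hkey : ∀ δ ∈ Ioc (0 : ℝ) 1, ∀ t ∈ Icc (0 : ℝ) (1 / (10 * n)),
      0 ≤ V δ + n * t * e δ - 5 * n ^ 2 * t ^ 2 * M →
      C ^ (n - 1) * W δ ≥ (V δ + n * t * e δ - 5 * n ^ 2 * t ^ 2 * M) ^ n)
    (hWlim : Tendsto W (nhdsWithin 0 (Ioi 0)) (nhds 0)) :
    Tendsto e (nhdsWithin 0 (Ioi 0)) (nhds 0) ∧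
      Tendsto V (nhdsWithin 0 (Ioi 0)) (nhds 0) :=
  stmt_2_general n hn M C hM V e W hV he0 heM hkey hWlim
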